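/- arXiv:1803.08623 — 4 statements merged into one kernel-verified Lean document; each statement's English description precedes it below -/
import Mathlib

section
/- If φ : ℝ≥0 → ℝ is a C^∞ function that is completely alternating (i.e., φ⁽ᵏ⁾ ≥ 0 for odd k and φ⁽ᵏ⁾ ≤ 0 for even k ≥ 2, with φ > 0), then ψ = 1/φ is completely monotone (i.e., (-1)ᵏ ψ⁽ᵏ⁾ ≥ 0 for all k ≥ 0). -/
open Filter Set Finset Topology

private lemma contDiffAt_iteratedDeriv_of_open {f : ℝ → ℝ} {U : Set ℝ} (hU : IsOpen U)
    (hf : ∀ x ∈ U, ContDiffAt ℝ (⊤ : ℕ∞) f x) :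
    ∀ k : ℕ, ∀ x ∈ U, ContDiffAt ℝ (⊤ : ℕ∞) (iteratedDeriv k f) x := by
  intro k
  induction k with
  | zero => intro x hx; simpa [iteratedDeriv_zero] using hf x hx
  | succ k ih =>
    intro x hx
    have hg : ContDiffOn ℝ (⊤ : ℕ∞) (iteratedDeriv k f) U := fun y hy => (ih y hy).contDiffWithinAt
    have hd : ContDiffOn ℝ (⊤ : ℕ∞) (deriv (iteratedDeriv k f)) U :=
      hg.deriv_of_isOpen hU (by simp)
    rw [iteratedDeriv_succ]
    exact hd.contDiffAt (hU.mem_nhds hx)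

private lemma leibniz_on_open {U : Set ℝ} (hU : IsOpen U) {f g : ℝ → ℝ}
    (hf : ∀ x ∈ U, ContDiffAt ℝ (⊤ : ℕ∞) f x) (hg : ∀ x ∈ U, ContDiffAt ℝ (⊤ : ℕ∞) g x) :
    ∀ n : ℕ, ∃ c : ℕ → ℝ, c n = 1 ∧ (∀ k, 0 ≤ c k) ∧ (∀ k, n < k → c k = 0) ∧
      ∀ x ∈ U, iteratedDeriv n (fun y => f y * g y) x =
        ∑ k ∈ Finset.range (n + 1),
          c k * iteratedDeriv k f x * iteratedDeriv (n - k) g x := by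
  intro n
  induction n with
  | zero =>
    refine ⟨fun k => if k = 0 then 1 else 0, by simp, fun k => by positivity,
      fun k hk => by simp; omega, ?_⟩
    intro x hx
    simp [iteratedDeriv_zero]
  | succ n ih =>
    obtain ⟨c, hc1, hc0, hctop, hcx⟩ := ih
    refine ⟨fun k => (if 1 ≤ k then c (k - 1) else 0) + c k, ?_, ?_, ?_, ?_⟩
    · simp [hc1, hctop (n + 1) (Nat.lt_succ_self n)]
    · intro k
      have := hc0 k
      have := hc0 (k - 1)
      positivity
    · intro k hk
      have h1 : c k = 0 := hctop k (by omega)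
      have h2 : c (k - 1) = 0 := hctop (k - 1) (by omega)
      simp [h1, h2]
    · intro x hx
      have hderivs : ∀ m : ℕ, DifferentiableAt ℝ (iteratedDeriv m f) x :=
        fun m => (contDiffAt_iteratedDeriv_of_open hU hf m x hx).differentiableAt (by simp)
      have hderivg : ∀ m : ℕ, DifferentiableAt ℝ (iteratedDeriv m g) x :=
        fun m => (contDiffAt_iteratedDeriv_of_open hU hg m x hx).differentiableAt (by simp)
      have heq : iteratedDeriv n (fun y => f y * g y) =ᶠ[𝓝 x]
          fun y => ∑ k ∈ Finset.range (n + 1),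
            c k * iteratedDeriv k f y * iteratedDeriv (n - k) g y :=
        eventuallyEq_of_mem (hU.mem_nhds hx) (fun y hy => hcx y hy)
      have hD : HasDerivAt (fun y => ∑ k ∈ Finset.range (n + 1),
            c k * iteratedDeriv k f y * iteratedDeriv (n - k) g y)
          (∑ k ∈ Finset.range (n + 1),
            (c k * iteratedDeriv (k + 1) f x * iteratedDeriv (n - k) g x +
             c k * iteratedDeriv k f x * iteratedDeriv (n - k + 1) g x)) x := by
        refine HasDerivAt.fun_sum fun k _ => ?_
        have h1 : HasDerivAt (iteratedDeriv k f) (iteratedDeriv (k + 1) f x) x := by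
          rw [iteratedDeriv_succ]; exact (hderivs k).hasDerivAt
        have h2 : HasDerivAt (iteratedDeriv (n - k) g) (iteratedDeriv (n - k + 1) g x) x := by
          rw [iteratedDeriv_succ]; exact (hderivg (n - k)).hasDerivAt
        exact (h1.const_mul (c k)).mul h2
      have hstep : iteratedDeriv (n + 1) (fun y => f y * g y) x =
          ∑ k ∈ Finset.range (n + 1),
            (c k * iteratedDeriv (k + 1) f x * iteratedDeriv (n - k) g x +
             c k * iteratedDeriv k f x * iteratedDeriv (n - k + 1) g x) := by
        rw [iteratedDeriv_succ, heq.deriv_eq, hD.deriv]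
      rw [hstep]
      rw [Finset.sum_add_distrib]
      have hA : ∑ k ∈ Finset.range (n + 2),
            (if 1 ≤ k then c (k - 1) else 0) * iteratedDeriv k f x
              * iteratedDeriv (n + 1 - k) g x
          = ∑ k ∈ Finset.range (n + 1),
            c k * iteratedDeriv (k + 1) f x * iteratedDeriv (n - k) g x := by
        rw [Finset.sum_range_succ']
        simp [Nat.succ_sub_succ]
      have hB : ∑ k ∈ Finset.range (n + 2),
            c k * iteratedDeriv k f x * iteratedDeriv (n + 1 - k) g x
          = ∑ k ∈ Finset.range (n + 1),
            c k * iteratedDeriv k f x * iteratedDeriv (n - k + 1) g x := by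
        rw [Finset.sum_range_succ, hctop (n + 1) (Nat.lt_succ_self n)]
        simp only [zero_mul, add_zero]
        refine Finset.sum_congr rfl fun k hk => ?_
        have hk' : k ≤ n := Nat.lt_succ_iff.mp (Finset.mem_range.mp hk)
        rw [Nat.succ_sub hk']
      rw [← hA, ← hB, ← Finset.sum_add_distrib]
      exact Finset.sum_congr rfl fun k _ => by ring

private lemma my_iteratedDeriv_const (n : ℕ) : ∀ (c : ℝ),
    iteratedDeriv (n + 1) (fun _ : ℝ => c) = fun _ => 0 := by
  induction n with
  | zero => intro c; funext x; simp [iteratedDeriv_one]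
  | succ n ih =>
    intro c
    rw [iteratedDeriv_succ']
    have : deriv (fun _ : ℝ => c) = fun _ : ℝ => (0:ℝ) := by funext y; simp
    rw [this, ih 0]

theorem dual_of_completely_alternating_is_completely_monotone
    (φ : ℝ → ℝ) (hsmooth : ContDiff ℝ (⊤ : ℕ∞) φ)
    (hpos : ∀ x ≥ (0:ℝ), 0 < φ x)
    (hCA : ∀ k : ℕ, 1 ≤ k → ∀ x ≥ (0:ℝ), 0 ≤ (-1 : ℝ) ^ (k - 1) * iteratedDeriv k φ x) :
    ∀ k : ℕ, ∀ x ≥ (0:ℝ), 0 ≤ (-1 : ℝ) ^ k * iteratedDeriv k (fun y => 1 / φ y) x := by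
  have hU : IsOpen {y : ℝ | 0 < φ y} := isOpen_lt continuous_const hsmooth.continuous
  set ψ : ℝ → ℝ := fun y => 1 / φ y with hψdef
  have hψat : ∀ y ∈ {y : ℝ | 0 < φ y}, ContDiffAt ℝ (⊤ : ℕ∞) ψ y := fun y hy =>
    contDiffAt_const.div hsmooth.contDiffAt (ne_of_gt hy)
  have hφat : ∀ y ∈ {y : ℝ | 0 < φ y}, ContDiffAt ℝ (⊤ : ℕ∞) φ y := fun y _ => hsmooth.contDiffAt
  intro k
  induction k using Nat.strong_induction_on with
  | _ k IH =>
    match k with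
    | 0 =>
      intro x hx
      simp only [pow_zero, one_mul, iteratedDeriv_zero, hψdef]
      exact div_nonneg zero_le_one (hpos x hx).le
    | n + 1 =>
      intro x hx
      have hxU : x ∈ {y : ℝ | 0 < φ y} := hpos x hx
      obtain ⟨c, hc1, hc0, hctop, hcx⟩ := leibniz_on_open hU hψat hφat (n + 1)
      have hzero : iteratedDeriv (n + 1) (fun y => ψ y * φ y) x = 0 := by
        have hev : (fun y => ψ y * φ y) =ᶠ[𝓝 x] (fun _ => (1:ℝ)) :=
          eventuallyEq_of_mem (hU.mem_nhds hxU) (fun y hy => by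
            have hy' : φ y ≠ 0 := ne_of_gt (show (0:ℝ) < φ y from hy)
            simp only [hψdef]
            field_simp)
        rw [hev.iteratedDeriv_eq, my_iteratedDeriv_const n 1]
      have hsum := hcx x hxU
      rw [hzero, Finset.sum_range_succ, hc1, Nat.sub_self, iteratedDeriv_zero] at hsum
      -- hsum : 0 = ∑ k ∈ range (n+1), c k * ψ⁽ᵏ⁾ x * φ⁽ⁿ⁺¹⁻ᵏ⁾ x + 1 * ψ⁽ⁿ⁺¹⁾ x * φ x
      have hS : 0 ≤ ∑ k ∈ Finset.range (n + 1),
          c k * ((-1:ℝ) ^ k * iteratedDeriv k ψ x)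
            * ((-1:ℝ) ^ (n - k) * iteratedDeriv (n + 1 - k) φ x) := by
        refine Finset.sum_nonneg fun k hk => ?_
        have hk' : k ≤ n := Nat.lt_succ_iff.mp (Finset.mem_range.mp hk)
        have h1 : 0 ≤ (-1:ℝ) ^ k * iteratedDeriv k ψ x :=
          IH k (by omega) x hx
        have h2 : 0 ≤ (-1:ℝ) ^ (n - k) * iteratedDeriv (n + 1 - k) φ x := by
          have := hCA (n + 1 - k) (by omega) x hx
          have hnk : n + 1 - k - 1 = n - k := by omega
          rwa [hnk] at this
        exact mul_nonneg (mul_nonneg (hc0 k) h1) h2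
      have hkey : φ x * ((-1:ℝ) ^ (n + 1) * iteratedDeriv (n + 1) ψ x)
          = ∑ k ∈ Finset.range (n + 1),
            c k * ((-1:ℝ) ^ k * iteratedDeriv k ψ x)
              * ((-1:ℝ) ^ (n - k) * iteratedDeriv (n + 1 - k) φ x) := by
        have hs : iteratedDeriv (n + 1) ψ x * φ x
            = -∑ k ∈ Finset.range (n + 1),
                c k * iteratedDeriv k ψ x * iteratedDeriv (n + 1 - k) φ x := by
          linarith [hsum]
        calc φ x * ((-1:ℝ) ^ (n + 1) * iteratedDeriv (n + 1) ψ x)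
            = (-1:ℝ) ^ (n + 1) * (iteratedDeriv (n + 1) ψ x * φ x) := by ring
          _ = (-1:ℝ) ^ (n + 1) * -∑ k ∈ Finset.range (n + 1),
                c k * iteratedDeriv k ψ x * iteratedDeriv (n + 1 - k) φ x := by rw [hs]
          _ = ∑ k ∈ Finset.range (n + 1), (-1:ℝ) ^ n *
                (c k * iteratedDeriv k ψ x * iteratedDeriv (n + 1 - k) φ x) := by
              rw [mul_neg, Finset.mul_sum, ← Finset.sum_neg_distrib]
              exact Finset.sum_congr rfl fun k _ => by rw [pow_succ]; ring
          _ = _ := by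
              refine Finset.sum_congr rfl fun k hk => ?_
              have hk' : k ≤ n := Nat.lt_succ_iff.mp (Finset.mem_range.mp hk)
              have hpow : (-1:ℝ) ^ k * (-1:ℝ) ^ (n - k) = (-1:ℝ) ^ n := by
                rw [← pow_add]
                congr 1
                omega
              rw [← hpow]; ring
      have := hS
      rw [← hkey] at this
      exact nonneg_of_mul_nonneg_right this (hpos x hx)
end

section
/- Let φ : [0,∞) → ℝ be of class C^n for a fixed positive integer n. Then ∑_{k=0}^n (-1)^k (n choose k) φ(x + k t) ≥ 0 for all x, t ≥ 0 if and only if (-1)^n φ^(n)(x) ≥ 0 for all x ≥ 0. -/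
/-!
Mean value theorem for finite differences: `Δₜⁿ φ x = tⁿ φ⁽ⁿ⁾ ξ` for some `ξ ∈ [x, x + n t]`,
by induction on `n`, since `Δₜ` commutes with differentiation and `Δₜ g = t g'(η)` by the
ordinary mean value theorem. The alternating binomial sum is `(-1)ⁿ Δₜⁿ φ x`, so it has the sign
of `(-1)ⁿ φ⁽ⁿ⁾` at an intermediate point; conversely, if `(-1)ⁿ φ⁽ⁿ⁾ x < 0`, continuity keeps it
negative on `[x, x + n t]` for small `t > 0`, making the sum negative.
-/

open Finset Set fwdDiff

theorem neg_one_pow_mul_fwdDiff_iter_eq_sum_shift {R : Type*} [CommRing R] (f : R → R)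
    (n : ℕ) (x t : R) :
    (-1) ^ n * (Δ_[t])^[n] f x =
      ∑ k ∈ Finset.range (n + 1), (-1 : R) ^ k * (n.choose k : R) * f (x + k * t) := by
  rw [fwdDiff_iter_eq_sum_shift, mul_sum]
  refine sum_congr rfl fun k hk => ?_
  have hkn : k ≤ n := Nat.lt_succ_iff.mp (mem_range.mp hk)
  have hsign : (-1 : R) ^ n * (-1) ^ (n - k) = (-1) ^ k := by
    rw [← pow_add, show n + (n - k) = k + 2 * (n - k) by omega, pow_add, pow_mul]
    simp
  rw [zsmul_eq_mul, nsmul_eq_mul]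
  push_cast
  rw [← hsign]
  ring

section

variable {𝕜 F : Type*} [NontriviallyNormedField 𝕜] [NormedAddCommGroup F] [NormedSpace 𝕜 F]
  {n : ℕ} {f : 𝕜 → F}

theorem ContDiff.fwdDiff (hf : ContDiff 𝕜 n f) (t : 𝕜) : ContDiff 𝕜 n (Δ_[t] f) :=
  (hf.comp (contDiff_id.add contDiff_const)).sub hf

theorem iteratedDeriv_fwdDiff (hf : ContDiff 𝕜 n f) (t : 𝕜) :
    iteratedDeriv n (Δ_[t] f) = Δ_[t] (iteratedDeriv n f) := by
  ext y
  have hshift : ContDiff 𝕜 n (fun z => f (z + t)) := hf.comp (contDiff_id.add contDiff_const)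
  change iteratedDeriv n (fun z => f (z + t) - f z) y =
    iteratedDeriv n f (y + t) - iteratedDeriv n f y
  rw [iteratedDeriv_fun_sub hshift.contDiffAt hf.contDiffAt, iteratedDeriv_comp_add_const]

end

theorem exists_mem_Icc_fwdDiff_eq_mul_deriv {g : ℝ → ℝ} (hg : Differentiable ℝ g) (a : ℝ)
    {t : ℝ} (ht : 0 ≤ t) : ∃ η ∈ Icc a (a + t), Δ_[t] g a = t * deriv g η := by
  rcases ht.eq_or_lt with rfl | ht
  · exact ⟨a, by simp [fwdDiff]⟩
  obtain ⟨η, hη, hslope⟩ := exists_deriv_eq_slope g (lt_add_of_pos_right a ht)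
    hg.continuous.continuousOn hg.differentiableOn
  refine ⟨η, Ioo_subset_Icc_self hη, ?_⟩
  rw [hslope, add_sub_cancel_left, mul_div_cancel₀ _ ht.ne']
  rfl

theorem exists_mem_Icc_fwdDiff_iter_eq_pow_mul_iteratedDeriv {n : ℕ} {f : ℝ → ℝ}
    (hf : ContDiff ℝ n f) (x : ℝ) {t : ℝ} (ht : 0 ≤ t) :
    ∃ ξ ∈ Icc x (x + n * t), (Δ_[t])^[n] f x = t ^ n * iteratedDeriv n f ξ := by
  induction n generalizing f with
  | zero => exact ⟨x, by simp⟩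
  | succ n ih =>
    have hfn : ContDiff ℝ n f := hf.of_le (by exact_mod_cast n.le_succ)
    obtain ⟨ξ, hξ, hΔ⟩ := ih (hfn.fwdDiff t)
    obtain ⟨η, hη, hmvt⟩ := exists_mem_Icc_fwdDiff_eq_mul_deriv
      (hf.differentiable_iteratedDeriv n (by exact_mod_cast n.lt_succ_self)) ξ ht
    refine ⟨η, ⟨hξ.1.trans hη.1, ?_⟩, ?_⟩
    · push_cast
      linarith [hξ.2, hη.2]
    · rw [Function.iterate_succ_apply, hΔ, iteratedDeriv_fwdDiff hfn, hmvt, iteratedDeriv_succ]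
      ring

theorem finite_difference_sign_iff_derivative_sign_general
    (n : ℕ) (φ : ℝ → ℝ) (hCn : ContDiff ℝ n φ) :
    (∀ x ≥ (0:ℝ), ∀ t ≥ (0:ℝ),
        0 ≤ ∑ k ∈ Finset.range (n + 1),
          (-1 : ℝ) ^ k * (n.choose k : ℝ) * φ (x + k * t)) ↔
    (∀ x ≥ (0:ℝ), 0 ≤ (-1 : ℝ) ^ n * iteratedDeriv n φ x) := by
  have hmvt : ∀ x t : ℝ, 0 ≤ t → ∃ ξ ∈ Icc x (x + n * t),
      ∑ k ∈ Finset.range (n + 1), (-1 : ℝ) ^ k * (n.choose k : ℝ) * φ (x + k * t) =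
        t ^ n * ((-1) ^ n * iteratedDeriv n φ ξ) := fun x t ht => by
    obtain ⟨ξ, hξ, hΔ⟩ := exists_mem_Icc_fwdDiff_iter_eq_pow_mul_iteratedDeriv hCn x ht
    exact ⟨ξ, hξ, by rw [← neg_one_pow_mul_fwdDiff_iter_eq_sum_shift, hΔ]; ring⟩
  constructor
  · intro hsum x hx
    by_contra! hneg
    obtain ⟨δ, hδ, hnear⟩ := Metric.eventually_nhds_iff.mp
      (((hCn.continuous_iteratedDeriv n le_rfl).const_mul ((-1 : ℝ) ^ n)).continuousAt.eventually
        (gt_mem_nhds hneg))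
    have ht : 0 < δ / (n + 1) := by positivity
    obtain ⟨ξ, hξ, hsum_eq⟩ := hmvt x _ ht.le
    have hξ_near : dist ξ x < δ := by
      have : n * (δ / (n + 1)) < δ := by
        rw [mul_div_assoc', div_lt_iff₀ (by positivity)]
        nlinarith
      rw [Real.dist_eq, abs_of_nonneg (by linarith [hξ.1])]
      linarith [hξ.2]
    have hsum_nonneg := hsum x hx _ ht.le
    rw [hsum_eq] at hsum_nonneg
    exact (mul_neg_of_pos_of_neg (pow_pos ht n) (hnear hξ_near)).not_ge hsum_nonneg
  · intro hder x hx t ht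
    obtain ⟨ξ, hξ, hsum_eq⟩ := hmvt x t ht
    rw [hsum_eq]
    exact mul_nonneg (pow_nonneg ht n) (hder ξ (hx.trans hξ.1))

theorem finite_difference_sign_iff_derivative_sign
    (n : ℕ) (hn : 1 ≤ n) (φ : ℝ → ℝ) (hCn : ContDiff ℝ n φ) :
    (∀ x ≥ (0:ℝ), ∀ t ≥ (0:ℝ),
        0 ≤ ∑ k ∈ Finset.range (n + 1),
          (-1 : ℝ) ^ k * (n.choose k : ℝ) * φ (x + k * t)) ↔
    (∀ x ≥ (0:ℝ), 0 ≤ (-1 : ℝ) ^ n * iteratedDeriv n φ x) :=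
  finite_difference_sign_iff_derivative_sign_general n φ hCn
end

section
/- Define the forward difference operator on sequences β : ℕ → ℝ by (Δβ)(n) = β(n+1) - β(n). If β : ℕ → (0,∞) satisfies (-1)^k (Δ^k β)(n) ≤ 0 for all k ≥ 1 and n ≥ 0 (completely alternating), then the sequence ψ(n) = 1/β(n) satisfies (-1)^k (Δ^k ψ)(n) ≥ 0 for all k ≥ 0 and n ≥ 0 (completely monotone). -/
def fwdDiffSeq (f : ℕ → ℝ) : ℕ → ℝ := fun n => f (n + 1) - f n

/-- completely monotone up to order k -/
def CMle (k : ℕ) (f : ℕ → ℝ) : Prop :=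
  ∀ j, j ≤ k → ∀ n, 0 ≤ (-1 : ℝ) ^ j * (fwdDiffSeq^[j] f) n

lemma fwd_neg (k : ℕ) (f : ℕ → ℝ) :
    fwdDiffSeq^[k] (fun n => -f n) = fun n => -(fwdDiffSeq^[k] f n) := by
  induction k generalizing f with
  | zero => simp
  | succ k ih =>
    rw [Function.iterate_succ_apply, Function.iterate_succ_apply]
    have h : fwdDiffSeq (fun n => -f n) = fun n => -(fwdDiffSeq f n) := by
      funext n; simp [fwdDiffSeq]; ring
    rw [h, ih]

lemma fwd_add (k : ℕ) (f g : ℕ → ℝ) :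
    fwdDiffSeq^[k] (fun n => f n + g n)
      = fun n => fwdDiffSeq^[k] f n + fwdDiffSeq^[k] g n := by
  induction k generalizing f g with
  | zero => simp
  | succ k ih =>
    rw [Function.iterate_succ_apply, Function.iterate_succ_apply,
        Function.iterate_succ_apply]
    have h : fwdDiffSeq (fun n => f n + g n)
        = fun n => fwdDiffSeq f n + fwdDiffSeq g n := by
      funext n; simp [fwdDiffSeq]; ring
    rw [h, ih]

lemma fwd_shift (k : ℕ) (f : ℕ → ℝ) :
    fwdDiffSeq^[k] (fun n => f (n + 1)) = fun n => fwdDiffSeq^[k] f (n + 1) := by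
  induction k generalizing f with
  | zero => simp
  | succ k ih =>
    rw [Function.iterate_succ_apply, Function.iterate_succ_apply]
    have h : fwdDiffSeq (fun n => f (n + 1)) = fun n => fwdDiffSeq f (n + 1) := rfl
    rw [h, ih]

lemma CMle_mono {k j : ℕ} {f : ℕ → ℝ} (h : CMle k f) (hjk : j ≤ k) : CMle j f :=
  fun i hi n => h i (hi.trans hjk) n

lemma CMle_negDiff {k : ℕ} {f : ℕ → ℝ} (h : CMle (k + 1) f) :
    CMle k (fun n => -(fwdDiffSeq f n)) := by
  intro j hj n
  rw [fwd_neg]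
  have h1 : fwdDiffSeq^[j] (fwdDiffSeq f) = fwdDiffSeq^[j + 1] f :=
    (Function.iterate_succ_apply fwdDiffSeq j f).symm
  rw [h1]
  have ht := h (j + 1) (by omega) n
  show 0 ≤ (-1 : ℝ) ^ j * -(fwdDiffSeq^[j + 1] f n)
  have heq : (-1 : ℝ) ^ j * -(fwdDiffSeq^[j + 1] f n)
      = (-1 : ℝ) ^ (j + 1) * fwdDiffSeq^[j + 1] f n := by ring
  rw [heq]; exact ht

lemma CMle_shift {k : ℕ} {f : ℕ → ℝ} (h : CMle k f) :
    CMle k (fun n => f (n + 1)) := by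
  intro j hj n
  rw [fwd_shift]
  exact h j hj (n + 1)

lemma CMle_mul (k : ℕ) (f g : ℕ → ℝ) (hf : CMle k f) (hg : CMle k g) :
    CMle k (fun n => f n * g n) := by
  induction k generalizing f g with
  | zero =>
    intro j hj n
    interval_cases j
    simpa using mul_nonneg (by simpa using hf 0 le_rfl n) (by simpa using hg 0 le_rfl n)
  | succ k ih =>
    intro j hj n
    rcases Nat.lt_or_ge j (k + 1) with hjk | hjk
    · exact ih f g (CMle_mono hf (by omega)) (CMle_mono hg (by omega)) j (by omega) n
    · have hjeq : j = k + 1 := by omega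
      subst hjeq
      -- Leibniz step
      have hprod : fwdDiffSeq (fun n => f n * g n)
          = fun n => -((f (n + 1) * (-(fwdDiffSeq g n)))
              + ((-(fwdDiffSeq f n)) * g n)) := by
        funext n; simp [fwdDiffSeq]; ring
      rw [Function.iterate_succ_apply, hprod, fwd_neg, fwd_add]
      have h1 : CMle k (fun n => f (n + 1) * (-(fwdDiffSeq g n))) :=
        ih _ _ (CMle_shift (CMle_mono hf (by omega))) (CMle_negDiff hg)
      have h2 : CMle k (fun n => (-(fwdDiffSeq f n)) * g n) :=
        ih _ _ (CMle_negDiff hf) (CMle_mono hg (by omega))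
      have t1 := h1 k le_rfl n
      have t2 := h2 k le_rfl n
      show 0 ≤ (-1 : ℝ) ^ (k + 1)
        * -(fwdDiffSeq^[k] (fun n => f (n + 1) * -fwdDiffSeq g n) n
            + fwdDiffSeq^[k] (fun n => -fwdDiffSeq f n * g n) n)
      have heq : (-1 : ℝ) ^ (k + 1)
          * -(fwdDiffSeq^[k] (fun n => f (n + 1) * -fwdDiffSeq g n) n
              + fwdDiffSeq^[k] (fun n => -fwdDiffSeq f n * g n) n)
          = (-1 : ℝ) ^ k * fwdDiffSeq^[k] (fun n => f (n + 1) * -fwdDiffSeq g n) n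
            + (-1 : ℝ) ^ k * fwdDiffSeq^[k] (fun n => -fwdDiffSeq f n * g n) n := by
        ring
      rw [heq]; linarith

theorem dual_of_completely_alternating_seq_is_completely_monotone
    (β : ℕ → ℝ) (hpos : ∀ n, 0 < β n)
    (hCA : ∀ k : ℕ, 1 ≤ k → ∀ n : ℕ, (-1 : ℝ) ^ k * (fwdDiffSeq^[k] β) n ≤ 0) :
    ∀ k : ℕ, ∀ n : ℕ, 0 ≤ (-1 : ℝ) ^ k * (fwdDiffSeq^[k] (fun m => 1 / β m)) n := by
  set ψ : ℕ → ℝ := fun m => 1 / β m with hψ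
  -- Δβ is completely monotone (all orders)
  have hDβ : ∀ k, CMle k (fwdDiffSeq β) := by
    intro k j hj n
    have h1 : fwdDiffSeq^[j] (fwdDiffSeq β) = fwdDiffSeq^[j + 1] β :=
      (Function.iterate_succ_apply fwdDiffSeq j β).symm
    rw [h1]
    have ht := hCA (j + 1) (by omega) n
    have heq : (-1 : ℝ) ^ j * fwdDiffSeq^[j + 1] β n
        = -((-1 : ℝ) ^ (j + 1) * fwdDiffSeq^[j + 1] β n) := by ring
    rw [heq]; linarith
  -- key identity: Δψ = -(Δβ · ψ · σψ)
  have hkey : fwdDiffSeq ψ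
      = fun n => -(fwdDiffSeq β n * (ψ n * ψ (n + 1))) := by
    funext n
    have h0 : β n ≠ 0 := (hpos n).ne'
    have h1 : β (n + 1) ≠ 0 := (hpos (n + 1)).ne'
    simp only [fwdDiffSeq, hψ]
    field_simp
    ring_nf
  -- main induction
  have main : ∀ k, CMle k ψ := by
    intro k
    induction k with
    | zero =>
      intro j hj n
      interval_cases j
      simpa [hψ] using le_of_lt (one_div_pos.mpr (hpos n))
    | succ k ih =>
      intro j hj n
      rcases Nat.lt_or_ge j (k + 1) with hjk | hjk
      · exact ih j (by omega) n
      · have hjeq : j = k + 1 := by omega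
        subst hjeq
        have hprod : CMle k (fun n => fwdDiffSeq β n * (ψ n * ψ (n + 1))) :=
          CMle_mul k _ _ (hDβ k) (CMle_mul k _ _ ih (CMle_shift ih))
        have t := hprod k le_rfl n
        rw [Function.iterate_succ_apply, hkey, fwd_neg]
        show 0 ≤ (-1 : ℝ) ^ (k + 1)
          * -(fwdDiffSeq^[k] (fun n => fwdDiffSeq β n * (ψ n * ψ (n + 1))) n)
        have heq : (-1 : ℝ) ^ (k + 1)
            * -(fwdDiffSeq^[k] (fun n => fwdDiffSeq β n * (ψ n * ψ (n + 1))) n)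
            = (-1 : ℝ) ^ k
              * fwdDiffSeq^[k] (fun n => fwdDiffSeq β n * (ψ n * ψ (n + 1))) n := by
          ring
        rw [heq]; exact t
  intro k n
  exact main k k le_rfl n
end

section
/- Let φ(x) = x² + p x + q with p, q > 0 and complex (non-real) roots (p² < 4q). Then 1/φ is not completely monotone on [0,∞). -/
/-!
If `z = -p/2 + i √(q - p²/4)` is a root of `φ`, then `1/φ(y) = Re(-i/Im z · (y - z)⁻¹)`, so that
`(-1)^k (1/φ)^(k)(0) = k!/Im z · Im(u^(k+1))` with `u = (-z)⁻¹` in the upper half-plane.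
As `0 < arg u < π`, some multiple `(k+1) · arg u` lands in `(π, 2π)`, where the sine is negative.
-/

open Complex Real
open scoped Nat

lemma Real.exists_sin_succ_mul_neg {θ : ℝ} (h₀ : 0 < θ) (hπ : θ < π) :
    ∃ n : ℕ, sin ((n + 1) * θ) < 0 := by
  refine ⟨⌊π / θ⌋₊, ?_⟩
  have hlow : π < (⌊π / θ⌋₊ + 1) * θ := (div_lt_iff₀ h₀).mp (Nat.lt_floor_add_one _)
  have hupp : ⌊π / θ⌋₊ * θ ≤ π := (le_div_iff₀ h₀).mp (Nat.floor_le (by positivity))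
  rw [← sin_sub_two_pi]
  exact sin_neg_of_neg_of_neg_pi_lt (by linarith) (by linarith)

lemma Complex.im_pow_eq_norm_pow_mul_sin (u : ℂ) (n : ℕ) :
    (u ^ n).im = ‖u‖ ^ n * Real.sin (n * arg u) := by
  conv_lhs => rw [← norm_mul_exp_arg_mul_I u]
  rw [mul_pow, ← ofReal_pow, ← Complex.exp_nat_mul, ← mul_assoc, ← ofReal_natCast,
    ← ofReal_mul, im_ofReal_mul, exp_ofReal_mul_I_im]

lemma Complex.exists_im_pow_succ_neg {u : ℂ} (hu : 0 < u.im) : ∃ n : ℕ, (u ^ (n + 1)).im < 0 := by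
  have harg₀ : 0 < arg u := (arg_nonneg_iff.mpr hu.le).lt_of_ne
    fun h => hu.ne' (arg_eq_zero_iff.mp h.symm).2
  obtain ⟨n, hn⟩ := Real.exists_sin_succ_mul_neg harg₀ (arg_lt_pi_iff.mpr (Or.inr hu.ne'))
  refine ⟨n, ?_⟩
  have hu₀ : u ≠ 0 := fun h => by simp [h] at hu
  rw [im_pow_eq_norm_pow_mul_sin]
  push_cast
  exact mul_neg_of_pos_of_neg (by positivity) hn

lemma iteratedDeriv_re_comp_ofReal {e : ℂ → ℂ} {s : Set ℂ} (he : DifferentiableOn ℂ e s)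
    (hs : IsOpen s) (hℝ : ∀ x : ℝ, (x : ℂ) ∈ s) (k : ℕ) (x : ℝ) :
    iteratedDeriv k (fun y : ℝ => (e y).re) x = (iteratedDeriv k e x).re := by
  induction k generalizing x with
  | zero => simp
  | succ k ih =>
    have hdiff : DifferentiableAt ℂ (iteratedDeriv k e) x := by
      rw [iteratedDeriv_eq_iterate]
      exact ((he.analyticOnNhd hs).iterated_deriv k x (hℝ x)).differentiableAt
    rw [iteratedDeriv_succ, iteratedDeriv_succ, funext ih]
    exact hdiff.hasDerivAt.real_of_complex.deriv

lemma iteratedDeriv_inv_sub_const (z : ℂ) (k : ℕ) :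
    iteratedDeriv k (fun w : ℂ => (w - z)⁻¹) =
      fun w => (-1) ^ k * k ! * ((w - z)⁻¹) ^ (k + 1) := by
  rw [iteratedDeriv_comp_sub_const, iteratedDeriv_eq_iterate, iter_deriv_inv']
  ext w
  dsimp only
  rw [show (-1 - k : ℤ) = -((k + 1 : ℕ) : ℤ) by push_cast; ring, zpow_neg, zpow_natCast, inv_pow]

lemma one_div_sq_add_sq_eq_re_inv {z : ℂ} (hz : z.im ≠ 0) (y : ℝ) :
    1 / ((y - z.re) ^ 2 + z.im ^ 2) = (-I / z.im * ((y : ℂ) - z)⁻¹).re := by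
  have : (y - z.re) ^ 2 + z.im ^ 2 ≠ 0 := by positivity
  simp [normSq_apply, field]

lemma iteratedDeriv_one_div_sq_add_sq {z : ℂ} (hz : z.im ≠ 0) (k : ℕ) (x : ℝ) :
    iteratedDeriv k (fun y => 1 / ((y - z.re) ^ 2 + z.im ^ 2)) x =
      (-1) ^ k * k ! / z.im * ((((x : ℂ) - z)⁻¹) ^ (k + 1)).im := by
  have hℝ (y : ℝ) : (y : ℂ) ∈ ({z}ᶜ : Set ℂ) := fun h => hz (by simpa using congrArg im h.symm)
  have he : DifferentiableOn ℂ (fun w => -I / z.im * (w - z)⁻¹) {z}ᶜ :=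
    fun w hw => (((differentiableAt_id.sub_const z).inv (sub_ne_zero.mpr hw)).const_mul _
      ).differentiableWithinAt
  simp_rw [one_div_sq_add_sq_eq_re_inv hz]
  rw [iteratedDeriv_re_comp_ofReal he isOpen_compl_singleton hℝ, iteratedDeriv_const_mul_field,
    iteratedDeriv_inv_sub_const, show -I / z.im * ((-1) ^ k * k ! * (((x : ℂ) - z)⁻¹) ^ (k + 1)) =
      (((-1) ^ k * k ! / z.im : ℝ) : ℂ) * (-I * (((x : ℂ) - z)⁻¹) ^ (k + 1)) by push_cast; ring,
    re_ofReal_mul]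
  simp

lemma exists_neg_one_pow_mul_iteratedDeriv_one_div_sq_add_sq_neg {z : ℂ} (hz : 0 < z.im) :
    ∃ k : ℕ, (-1) ^ k * iteratedDeriv k (fun y => 1 / ((y - z.re) ^ 2 + z.im ^ 2)) 0 < 0 := by
  have hu : 0 < (((0 : ℝ) : ℂ) - z)⁻¹.im := by
    have : z ≠ 0 := fun h => by simp [h] at hz
    simp only [inv_im, sub_im, ofReal_im, zero_sub, neg_neg]
    exact div_pos hz (normSq_pos.mpr (by simpa))
  obtain ⟨k, hk⟩ := exists_im_pow_succ_neg hu
  refine ⟨k, ?_⟩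
  have hsign : (-1 : ℝ) ^ k * ((-1) ^ k * k ! / z.im) = k ! / z.im := by
    rw [mul_div_assoc, ← mul_assoc, ← mul_pow]
    norm_num
  rw [iteratedDeriv_one_div_sq_add_sq hz.ne', ← mul_assoc, hsign]
  exact mul_neg_of_pos_of_neg (by positivity) hk

theorem inv_quadratic_complex_roots_not_completely_monotone_general
    (p q : ℝ) (hdisc : p ^ 2 < 4 * q) :
    ¬ (∀ k : ℕ, ∀ x ≥ (0:ℝ),
        0 ≤ (-1 : ℝ) ^ k * iteratedDeriv k (fun y => 1 / (y ^ 2 + p * y + q)) x) := by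
  intro hcm
  set z : ℂ := ⟨-(p / 2), √(q - p ^ 2 / 4)⟩
  have hz : 0 < z.im := Real.sqrt_pos.mpr (by linarith)
  have hφ : (fun y : ℝ => 1 / (y ^ 2 + p * y + q)) = fun y => 1 / ((y - z.re) ^ 2 + z.im ^ 2) := by
    funext y
    rw [Real.sq_sqrt (by linarith)]
    ring
  obtain ⟨k, hk⟩ := exists_neg_one_pow_mul_iteratedDeriv_one_div_sq_add_sq_neg hz
  exact (hcm k 0 le_rfl).not_gt (hφ ▸ hk)

theorem inv_quadratic_complex_roots_not_completely_monotone
    (p q : ℝ) (hp : 0 < p) (hq : 0 < q) (hdisc : p ^ 2 < 4 * q) :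
    ¬ (∀ k : ℕ, ∀ x ≥ (0:ℝ),
        0 ≤ (-1 : ℝ) ^ k * iteratedDeriv k (fun y => 1 / (y ^ 2 + p * y + q)) x) :=
  inv_quadratic_complex_roots_not_completely_monotone_general p q hdisc
end
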